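/- arXiv:math/9803033 — 3 statements merged into one kernel-verified Lean document; each statement's English description precedes it below -/
import Mathlib

section
/- Let F be a finite field of odd characteristic, q a nondegenerate quadratic form on Fⁿ, ψ a nontrivial additive character of F, and φ the quadratic character. Then ∑_{x ∈ Fⁿ} ψ(q(x)) = φ(discr q) · (-g(φ))ⁿ, where discr q is the discriminant of q and g(φ) is the Gauss sum. -/
/-!
Congruence-diagonalize the form: `Pᵀ M P = diagonal w` with `P` invertible, and `x ↦ P x`
permutes `Fⁿ`, so the sum factors into the one-variable sums `∑ₓ ψ (wᵢ x²) = φ (wᵢ) g`.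
Then `∏ wᵢ = (det P)² det M`, and `φ` is the quadratic character, being the only nontrivial
character of order two.
-/

open Finset Matrix

theorem AddChar.map_sum_eq_prod {A M ι : Type*} [AddCommMonoid A] [CommMonoid M]
    (ψ : AddChar A M) (s : Finset ι) (f : ι → A) : ψ (∑ i ∈ s, f i) = ∏ i ∈ s, ψ (f i) :=
  map_prod ψ.toMonoidHom (Multiplicative.ofAdd ∘ f) s

section QuadraticChar

variable {F R : Type*} [Field F] [Fintype F] [DecidableEq F] [CommRing R] [IsDomain R]

-- A nontrivial character `φ` with `φ ^ 2 = 1` is `-1` at some `b`; then `b` is a nonsquare,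
-- and every nonsquare `a` is `b` times a square.
theorem MulChar.eq_quadraticChar_of_sq_eq_one {φ : MulChar F R} (hφ2 : φ ^ 2 = 1)
    (hφ1 : φ ≠ 1) : φ = (quadraticChar F).ringHomComp (Int.castRingHom R) := by
  have h_sq : ∀ {a : F}, a ≠ 0 → quadraticChar F a = 1 → φ a = 1 := by
    intro a ha h
    obtain ⟨c, rfl⟩ := (quadraticChar_one_iff_isSquare ha).mp h
    rw [map_mul, ← sq, ← MulChar.pow_apply' φ two_ne_zero, hφ2,
      MulChar.one_apply (isUnit_iff_ne_zero.mpr (left_ne_zero_of_mul ha))]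
  obtain ⟨b, hb⟩ := MulChar.ne_one_iff.mp hφ1
  have hφb : φ b = -1 := ((MulChar.isQuadratic_iff_sq_eq_one.mpr hφ2 b).resolve_left
    (b.isUnit.map φ).ne_zero).resolve_left hb
  have hχb : quadraticChar F b = -1 :=
    (quadraticChar_dichotomy b.ne_zero).resolve_left fun h ↦ hb (h_sq b.ne_zero h)
  refine MulChar.ext fun a ↦ ?_
  rw [MulChar.ringHomComp_apply]
  rcases quadraticChar_dichotomy a.ne_zero with h | h
  · simp [h, h_sq a.ne_zero h]
  · have hab : φ (a * b) = 1 :=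
      h_sq (mul_ne_zero a.ne_zero b.ne_zero) (by rw [map_mul, h, hχb]; norm_num)
    rw [map_mul, hφb] at hab
    rw [h, map_neg, map_one]
    linear_combination -hab

-- Group `x` by `t = x ^ 2`: the fibre has `1 + χ t` elements, and the constant `1` contributes
-- the vanishing sum `∑ t, ψ (a * t)`.
theorem sum_addChar_mul_sq (hF : ringChar F ≠ 2) {ψ : AddChar F R} (hψ : ψ ≠ 1) {a : F}
    (ha : a ≠ 0) :
    ∑ x, ψ (a * x ^ 2) =
      quadraticChar F a * gaussSum ((quadraticChar F).ringHomComp (Int.castRingHom R)) ψ := by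
  set χ := (quadraticChar F).ringHomComp (Int.castRingHom R)
  have h_card_sqrts : ∀ t, (#{x | x ^ 2 = t} : R) = χ t + 1 := fun t ↦ by
    simpa [χ, Set.toFinset_ofPred] using
      congrArg (Int.cast : ℤ → R) (quadraticChar_card_sqrts hF t)
  have h_shift : ∑ t, ψ (a * t) = 0 :=
    AddChar.sum_eq_zero_of_ne_one (AddChar.IsPrimitive.of_ne_one hψ ha)
  calc ∑ x, ψ (a * x ^ 2) = ∑ t, #{x | x ^ 2 = t} • ψ (a * t) := by
        rw [← sum_fiberwise univ (· ^ 2)]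
        refine sum_congr rfl fun t _ ↦ ?_
        rw [← sum_const]
        exact sum_congr rfl fun x hx ↦ by rw [(mem_filter.mp hx).2]
    _ = gaussSum χ (ψ.mulShift a) + ∑ t, ψ (a * t) := by
        simp only [nsmul_eq_mul, h_card_sqrts, add_mul, one_mul, sum_add_distrib, gaussSum,
          AddChar.mulShift_apply]
    _ = quadraticChar F a * gaussSum χ ψ := by
        rw [h_shift, add_zero, ← Units.val_mk0 ha, gaussSum_mulShift_eq,
          ((quadraticChar_isQuadratic F).comp _).inv]
        rfl

theorem sum_addChar_weightedSumSquares {ι : Type*} [Fintype ι] [DecidableEq ι]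
    (hF : ringChar F ≠ 2) {ψ : AddChar F R} (hψ : ψ ≠ 1) {w : ι → F} (hw : ∀ i, w i ≠ 0) :
    ∑ x : ι → F, ψ (∑ i, w i * x i ^ 2) =
      quadraticChar F (∏ i, w i) *
        gaussSum ((quadraticChar F).ringHomComp (Int.castRingHom R)) ψ ^ Fintype.card ι := by
  simp_rw [AddChar.map_sum_eq_prod]
  rw [← Fintype.prod_sum fun i (y : F) ↦ ψ (w i * y ^ 2)]
  simp [sum_addChar_mul_sq hF hψ (hw _), prod_mul_distrib]

end QuadraticChar

namespace Matrix

variable {K ι : Type*} [Fintype ι]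

theorem IsSymm.exists_isUnit_transpose_mul_mul_eq_diagonal [DecidableEq ι] [Field K]
    [Invertible (2 : K)] {M : Matrix ι ι K} (hM : M.IsSymm) :
    ∃ (P : Matrix ι ι K) (w : ι → K), IsUnit P ∧ Pᵀ * M * P = diagonal w := by
  let b := Pi.basisFun K ι
  let B := M.toBilin b
  obtain ⟨v, hv⟩ := LinearMap.BilinForm.exists_orthogonal_basis
    (LinearMap.BilinForm.isSymm_iff.mp ((isSymm_toBilin_iff_isSymm b).mpr hM))
  let e := v.indexEquiv b
  let u := v.reindex e
  refine ⟨b.toMatrix u, fun i ↦ B (u i) (u i), ?_, ?_⟩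
  · let := b.invertibleToMatrix u
    exact isUnit_of_invertible _
  · rw [← LinearMap.BilinForm.toMatrix_toBilin b M,
      LinearMap.BilinForm.toMatrix_mul_basis_toMatrix]
    ext i j
    rw [LinearMap.BilinForm.toMatrix_apply]
    rcases eq_or_ne i j with rfl | hij
    · rw [diagonal_apply_eq]
    · rw [diagonal_apply_ne _ hij, Module.Basis.reindex_apply, Module.Basis.reindex_apply]
      exact hv (e.symm.injective.ne hij)

theorem mulVec_dotProduct_mulVec_mulVec [CommSemiring K] (M P : Matrix ι ι K) (y : ι → K) :
    P *ᵥ y ⬝ᵥ M *ᵥ P *ᵥ y = y ⬝ᵥ (Pᵀ * M * P) *ᵥ y := by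
  rw [← mulVec_mulVec, ← mulVec_mulVec, dotProduct_mulVec y, vecMul_transpose]

theorem sum_dotProduct_mulVec_self_eq_of_isUnit {β : Type*} [DecidableEq ι] [CommRing K]
    [Fintype K] [AddCommMonoid β] (f : K → β) (M : Matrix ι ι K) {P : Matrix ι ι K}
    (hP : IsUnit P) :
    ∑ x, f (x ⬝ᵥ M *ᵥ x) = ∑ y, f (y ⬝ᵥ (Pᵀ * M * P) *ᵥ y) :=
  (Fintype.sum_bijective _ (mulVec_surjective_iff_isUnit.mpr hP).bijective_of_finite _ _
    fun y ↦ by rw [mulVec_dotProduct_mulVec_mulVec]).symm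

theorem dotProduct_diagonal_mulVec_self [DecidableEq ι] [CommSemiring K] (w x : ι → K) :
    x ⬝ᵥ diagonal w *ᵥ x = ∑ i, w i * x i ^ 2 := by
  simp only [dotProduct, mulVec_diagonal]
  exact sum_congr rfl fun i _ ↦ by ring

end Matrix

/-- For a nondegenerate quadratic form `q(x) = xᵀ M x` (with `M` a symmetric
matrix of nonzero determinant) over a finite field of odd characteristic, a nontrivial
additive character `ψ` and the quadratic character `φ`,
`∑_{x ∈ Fⁿ} ψ(q(x)) = φ(discr q) · (-g(φ))ⁿ`, where `-g(φ) = gaussSum φ ψ`. -/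
theorem sum_psi_quadratic_form {F : Type*} [Field F] [Fintype F]
    (hF : ringChar F ≠ 2) {n : ℕ}
    (M : Matrix (Fin n) (Fin n) F) (hsym : M.IsSymm) (hdet : M.det ≠ 0)
    (ψ : AddChar F ℂ) (hψ : ψ ≠ 1)
    (φ : MulChar F ℂ) (hφ2 : φ ^ 2 = 1) (hφ1 : φ ≠ 1) :
    ∑ x : Fin n → F, ψ (dotProduct x (M.mulVec x))
      = φ M.det * (gaussSum φ ψ) ^ n := by
  classical
  obtain rfl := MulChar.eq_quadraticChar_of_sq_eq_one hφ2 hφ1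
  let := invertibleOfNonzero (Ring.two_ne_zero hF)
  obtain ⟨P, w, hP, hPMP⟩ := hsym.exists_isUnit_transpose_mul_mul_eq_diagonal
  have hP_det : P.det ≠ 0 := ((isUnit_iff_isUnit_det P).mp hP).ne_zero
  have h_prod_w : ∏ i, w i = P.det ^ 2 * M.det := by
    rw [← det_diagonal, ← hPMP, det_mul, det_mul, det_transpose]
    ring
  have hw : ∀ i, w i ≠ 0 := fun i ↦
    prod_ne_zero_iff.mp (h_prod_w ▸ mul_ne_zero (pow_ne_zero 2 hP_det) hdet) i (mem_univ i)
  simp_rw [sum_dotProduct_mulVec_self_eq_of_isUnit _ M hP, hPMP, dotProduct_diagonal_mulVec_self,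
    sum_addChar_weightedSumSquares hF hψ hw, h_prod_w, map_mul, quadraticChar_sq_one' hP_det,
    one_mul, Fintype.card_fin, MulChar.ringHomComp_apply]
  rfl
end

section
/- Let T be a discrete valuation ring with maximal ideal 𝔭, and let γ be an element of finite order m in GL(M) for M a free T-module of finite rank, where m is not divisible by the residue characteristic (i.e., m is a unit-preserving order: m ∉ 𝔭 as an integer). If all eigenvalues of γ (in a suitable extension) are congruent to 1 modulo 𝔭, then γ = 1. In particular, if λ is a root of unity of order dividing m with λ ≡ 1 mod 𝔭 and m ∉ 𝔭, then λ = 1. -/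
/-!
Reduce `γ` modulo the maximal ideal of `O`. There its characteristic polynomial is `(X - 1) ^ n`,
so by Cayley–Hamilton the reduction is unipotent; being also of order dividing `m`, it is `1`.
Now if `y ^ m = 1`, then `(y - 1) * (1 + y + ⋯ + y ^ (m - 1)) = 0`, and whenever `y` reduces to
`1` along a local homomorphism (or `y - 1` is nilpotent) the second factor reduces to the unit
`m`, hence is itself a unit, forcing `y = 1`. Applied to `γ` along the reduction of matrices,
and to `μ` along `T → T/𝔭`, this gives both claims.
-/

open Polynomial IsLocalRing

theorem eq_one_of_pow_eq_one_of_isUnit_geom_sum {R : Type*} [Ring R] {y : R} {m : ℕ}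
    (hy : y ^ m = 1) (hu : IsUnit (∑ i ∈ Finset.range m, y ^ i)) : y = 1 := by
  rw [← sub_eq_zero, ← hu.mul_right_eq_zero, geom_sum_mul, hy, sub_self]

theorem eq_one_of_pow_eq_one_of_map_eq_one {R S : Type*} [Ring R] [Ring S] (φ : R →+* S)
    [IsLocalHom φ] {y : R} {m : ℕ} (hm : IsUnit (m : S)) (hy : y ^ m = 1) (hφ : φ y = 1) :
    y = 1 :=
  eq_one_of_pow_eq_one_of_isUnit_geom_sum hy <|
    isUnit_of_map_unit φ _ <| by simpa [map_sum, hφ] using hm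

theorem isUnit_geom_sum_of_isNilpotent_sub_one {R : Type*} [Ring R] {y : R} {m : ℕ}
    (hm : IsUnit (m : R)) (hy : IsNilpotent (y - 1)) :
    IsUnit (∑ i ∈ Finset.range m, y ^ i) := by
  set S := ∑ i ∈ Finset.range m, ∑ j ∈ Finset.range i, y ^ j
  have hsum : ∑ i ∈ Finset.range m, y ^ i = m + (y - 1) * S := by
    rw [Finset.mul_sum, Finset.sum_congr rfl fun i _ => mul_geom_sum y i, Finset.sum_sub_distrib]
    simp
  have hcomm : Commute (y - 1) S :=
    Commute.sum_right _ _ _ fun i _ => Commute.sum_right _ _ _ fun j _ =>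
      ((Commute.refl y).sub_left (Commute.one_left y)).pow_right j
  rw [hsum]
  exact (hcomm.isNilpotent_mul_right hy).isUnit_add_left_of_commute hm (Nat.commute_cast _ m)

theorem eq_one_of_pow_eq_one_of_isNilpotent_sub_one {R : Type*} [Ring R] {y : R} {m : ℕ}
    (hm : IsUnit (m : R)) (hy : y ^ m = 1) (hn : IsNilpotent (y - 1)) : y = 1 :=
  eq_one_of_pow_eq_one_of_isUnit_geom_sum hy (isUnit_geom_sum_of_isNilpotent_sub_one hm hn)

instance RingHom.isLocalHom_mapMatrix {n R S : Type*} [Fintype n] [DecidableEq n] [CommRing R]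
    [CommRing S] (f : R →+* S) [IsLocalHom f] :
    IsLocalHom (f.mapMatrix : Matrix n n R →+* Matrix n n S) where
  map_nonunit A hA := by
    rw [Matrix.isUnit_iff_isUnit_det, ← RingHom.map_det] at hA
    exact (Matrix.isUnit_iff_isUnit_det A).mpr (isUnit_of_map_unit f _ hA)

theorem Matrix.isNilpotent_sub_one_of_charpoly_eq {n R : Type*} [Fintype n] [DecidableEq n]
    [CommRing R] {A : Matrix n n R} (hA : A.charpoly = (X - 1) ^ Fintype.card n) :
    IsNilpotent (A - 1) :=
  ⟨Fintype.card n, by simpa [hA] using A.aeval_self_charpoly⟩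

theorem IsLocalRing.residue_eq_one_iff {R : Type*} [CommRing R] [IsLocalRing R] {x : R} :
    residue R x = 1 ↔ x - 1 ∈ maximalIdeal R := by
  rw [← residue_eq_zero_iff, map_sub, map_one, sub_eq_zero]

theorem eigenvalues_cong_one_implies_id_general
    {T : Type*} [CommRing T] [IsDomain T] [IsDiscreteValuationRing T]
    {O : Type*} [CommRing O] [IsLocalRing O]
    (f : T →+* O)
    (hloc : ∀ t : T, t ∈ maximalIdeal T → f t ∈ maximalIdeal O)
    {n : ℕ} (γ : Matrix (Fin n) (Fin n) T) (m : ℕ) (hγm : γ ^ m = 1)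
    (hm : (m : T) ∉ maximalIdeal T)
    (lam : Fin n → O)
    (hchar : (γ.map f).charpoly = ∏ i, (X - C (lam i)))
    (hlam : ∀ i, lam i - 1 ∈ maximalIdeal O) :
    γ = 1 ∧ ∀ μ : T, μ ^ m = 1 → μ - 1 ∈ maximalIdeal T → μ = 1 := by
  have : IsLocalHom f := ((local_hom_TFAE f).out 3 0).mp hloc
  let ψ : T →+* ResidueField O := (residue O).comp f
  have hmT : IsUnit (m : T) := notMem_maximalIdeal.mp hm
  have hmψ : IsUnit (m : Matrix (Fin n) (Fin n) (ResidueField O)) := by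
    simpa using hmT.map ((algebraMap _ (Matrix (Fin n) (Fin n) (ResidueField O))).comp ψ)
  have hχ : (γ.map ψ).charpoly = (X - 1) ^ Fintype.card (Fin n) := by
    change ((γ.map f).map (residue O)).charpoly = _
    rw [Matrix.charpoly_map, hchar, Polynomial.map_prod]
    simp [residue_eq_one_iff.mpr (hlam _)]
  have hγψ : γ.map ψ = 1 :=
    eq_one_of_pow_eq_one_of_isNilpotent_sub_one hmψ (by rw [← Matrix.map_pow, hγm]; simp)
      (Matrix.isNilpotent_sub_one_of_charpoly_eq hχ)
  refine ⟨eq_one_of_pow_eq_one_of_map_eq_one ψ.mapMatrix (y := γ) hmψ hγm hγψ, ?_⟩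
  exact fun μ hμm hμ => eq_one_of_pow_eq_one_of_map_eq_one (residue T)
    (by simpa using hmT.map (residue T)) hμm (residue_eq_one_iff.mpr hμ)

/-- Let `T` be a DVR with maximal ideal `𝔭`, and `γ` an invertible matrix
(element of `GL(M)`, `M` free of finite rank) with `γ^m = 1` where `m ∉ 𝔭` (as an element
of `T`).  If all eigenvalues of `γ` in a suitable extension (a local domain `O` over `T`
in which the characteristic polynomial of `γ` splits) are congruent to `1` modulo the
maximal ideal, then `γ = 1`.  In particular, a root of unity `λ` of order dividing `m`
with `λ ≡ 1 mod 𝔭` equals `1`. -/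
theorem eigenvalues_cong_one_implies_id
    {T : Type*} [CommRing T] [IsDomain T] [IsDiscreteValuationRing T]
    {O : Type*} [CommRing O] [IsDomain O] [IsLocalRing O]
    (f : T →+* O) (hf : Function.Injective f)
    (hloc : ∀ t : T, t ∈ maximalIdeal T → f t ∈ maximalIdeal O)
    {n : ℕ} (γ : Matrix (Fin n) (Fin n) T) (m : ℕ) (hγm : γ ^ m = 1)
    (hm : (m : T) ∉ maximalIdeal T)
    (lam : Fin n → O)
    (hchar : (γ.map f).charpoly = ∏ i, (X - C (lam i)))
    (hlam : ∀ i, lam i - 1 ∈ maximalIdeal O) :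
    γ = 1 ∧ ∀ μ : T, μ ^ m = 1 → μ - 1 ∈ maximalIdeal T → μ = 1 :=
  eigenvalues_cong_one_implies_id_general f hloc γ m hγm hm lam hchar hlam
end

section
/- Let V be a finite-dimensional vector space over a field of odd characteristic, G ⊂ GL(V) a finite group generated by reflections with Vᴳ = {0}, and q a G-invariant symmetric bilinear form on V. Suppose that for every reflection s in G with root vector α_s (an eigenvector of s with eigenvalue -1 orthogonal to the fixed hyperplane of s) one has q(α_s, α_s) ≠ 0, and suppose the common fixed space of all reflections is zero. Then q is nondegenerate. -/
open Module

/-- Let `G ⊂ GL(V)` be a finite group generated by a set `S` of reflections,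
over a field of characteristic `≠ 2`, with `Vᴳ = {0}` (here: the common fixed space of
the reflections is zero), and let `q` be a `G`-invariant symmetric bilinear form such that
each reflection `s ∈ S` has a root vector `α s` (a `(-1)`-eigenvector orthogonal to the
fixed hyperplane of `s`) with `q(α s, α s) ≠ 0`.  Then `q` is nondegenerate. -/
theorem invariant_form_nondegenerate {k V : Type*} [Field k] (h2 : (2 : k) ≠ 0)
    [AddCommGroup V] [Module k V] [FiniteDimensional k V]
    (G : Subgroup (V ≃ₗ[k] V)) [Finite G]
    (S : Set (V ≃ₗ[k] V))
    (hS : ∀ s ∈ S, s ∈ G ∧ s ≠ 1 ∧ s * s = 1 ∧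
      ∃ H : Submodule k V, finrank k H + 1 = finrank k V ∧ ∀ h ∈ H, s h = h)
    (hgen : Subgroup.closure S = G)
    (q : LinearMap.BilinForm k V) (hsymm : ∀ x y, q x y = q y x)
    (hinv : ∀ g ∈ G, ∀ x y, q (g x) (g y) = q x y)
    (α : (V ≃ₗ[k] V) → V)
    (hroot : ∀ s ∈ S, s (α s) = -α s ∧ (∀ y, s y = y → q (α s) y = 0) ∧ q (α s) (α s) ≠ 0)
    (hfix : ∀ x : V, (∀ s ∈ S, s x = x) → x = 0) :
    ∀ x : V, (∀ y : V, q x y = 0) → x = 0 := by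
  intro x hx
  apply hfix
  intro s hs
  obtain ⟨-, -, -, H, hHrank, hHfix⟩ := hS s hs
  obtain ⟨hα, horth, hne⟩ := hroot s hs
  -- α s ∉ H
  have hαH : α s ∉ H := by
    intro hmem
    exact hne (horth _ (hHfix _ hmem))
  -- H ⊔ span (α s) = ⊤
  have htop : H ⊔ Submodule.span k {α s} = ⊤ := by
    have hlt : H < H ⊔ Submodule.span k {α s} := by
      refine lt_of_le_of_ne le_sup_left ?_
      intro heq
      have : α s ∈ H ⊔ Submodule.span k {α s} :=
        Submodule.mem_sup_right (Submodule.mem_span_singleton_self _)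
      exact hαH (heq ▸ this)
    have h1 : finrank k H < finrank k (H ⊔ Submodule.span k {α s} : Submodule k V) :=
      Submodule.finrank_lt_finrank_of_lt hlt
    have h2' : finrank k (H ⊔ Submodule.span k {α s} : Submodule k V) ≤ finrank k V :=
      Submodule.finrank_le _
    apply Submodule.eq_top_of_finrank_eq
    omega
  obtain ⟨y, hy, z, hz, hxyz⟩ := Submodule.mem_sup.mp (htop ▸ Submodule.mem_top : x ∈ _)
  obtain ⟨c, rfl⟩ := Submodule.mem_span_singleton.mp hz
  -- q x (α s) = 0 forces c = 0
  have hqy : q y (α s) = 0 := by rw [hsymm]; exact horth _ (hHfix _ hy)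
  have : c * q (α s) (α s) = 0 := by
    have := hx (α s)
    rw [← hxyz] at this
    simpa [hqy, map_add, map_smul] using this
  have hc : c = 0 := by
    rcases mul_eq_zero.mp this with h | h
    · exact h
    · exact absurd h hne
  rw [← hxyz, hc, zero_smul, add_zero]
  exact hHfix _ hy
end
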